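/- For each subset E ⊆ K[X] and each subset 𝔖 ⊆ TO(M) that is closed in TO(M), the set of minimal elements (with respect to inclusion) of the set of ideals {LM_≤(E) : ≤ ∈ 𝔖} is finite; that is, there exist at most finitely many distinct minimal leading monomial ideals of E from 𝔖. -/

import Mathlib

/-!
A polynomial has finite support, so `LM_≤(e)` only depends on finitely many comparisons and is
locally constant in `≤`. Since `LM_≤(E)` is finitely generated by Hilbert's basis theorem, it is
generated by the leading monomials of finitely many `e ∈ E`, whence `LM_≤(E) ⊆ LM_≤'(E)` for all
`≤'` near `≤`. The space `TO(M)` is compact, so a closed `𝔖` is covered by finitely many such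
neighbourhoods, and every minimal ideal must be the ideal attached to one of their centres.
-/

/-- A binary relation is a total ordering: antisymmetric, transitive, and total. -/
def IsTotalOrdering {S : Type*} (r : S → S → Prop) : Prop :=
  (∀ a b, r a b → r b a → a = b) ∧ (∀ a b c, r a b → r b c → r a c) ∧ (∀ a b, r a b ∨ r b a)

/-- The set `TO(S)` of all total orderings on `S`. -/
def TO (S : Type*) : Type _ := {r : S → S → Prop // IsTotalOrdering r}

/-- The topology `𝒰(S)` on `TO(S)`, generated by the subbasis of all sets
`U_{(a,b)} = {≤ ∈ TO(S) : a ≤ b}`. -/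
instance TOTopology (S : Type*) : TopologicalSpace (TO S) :=
  TopologicalSpace.generateFrom {U | ∃ a b : S, U = {r : TO S | r.1 a b}}
/-- Monomials of `K[X_1,…,X_t]`, identified with their exponent vectors `ν ∈ ℕ^t`. -/
abbrev Mon (t : ℕ) := Fin t →₀ ℕ

/-- `LM` is a leading-monomial function: for each total ordering `r` on monomials and each
nonzero polynomial `p`, `LM r p` is the `r`-maximal element of the support of `p`. -/
def IsLM (K : Type*) [Field K] (t : ℕ)
    (LM : TO (Mon t) → MvPolynomial (Fin t) K → Mon t) : Prop :=
  ∀ (r : TO (Mon t)) (p : MvPolynomial (Fin t) K), p ≠ 0 →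
    LM r p ∈ p.support ∧ ∀ m ∈ p.support, r.1 m (LM r p)

/-- The leading monomial ideal `LM_≤(E)` of a subset `E ⊆ K[X]`: the ideal generated by the
leading monomials of the nonzero elements of `E`. -/
noncomputable def LMideal (K : Type*) [Field K] (t : ℕ)
    (LM : TO (Mon t) → MvPolynomial (Fin t) K → Mon t)
    (r : TO (Mon t)) (E : Set (MvPolynomial (Fin t) K)) : Ideal (MvPolynomial (Fin t) K) :=
  Ideal.span {q | ∃ e ∈ E, e ≠ 0 ∧ q = MvPolynomial.monomial (LM r e) (1 : K)}

open Filter Topology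

theorem IsCompact.finite_setOf_minimal_image {X α : Type*} [TopologicalSpace X] [PartialOrder α]
    {C : Set X} (hC : IsCompact C) {F : X → α} (hF : ∀ x, ∀ᶠ y in 𝓝 x, F x ≤ F y) :
    {a | Minimal (· ∈ F '' C) a}.Finite := by
  obtain ⟨T, hTC, hCT⟩ := hC.elim_nhds_subcover (fun x => {y | F x ≤ F y}) fun x _ => hF x
  refine (T.finite_toSet.image F).subset ?_
  intro a ha
  obtain ⟨x, hxC, rfl⟩ := ha.prop
  obtain ⟨c, hcT, hxc⟩ := Set.mem_iUnion₂.mp (hCT hxC)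
  exact ⟨c, hcT, ha.eq_of_le ⟨c, hTC c hcT, rfl⟩ hxc⟩

namespace TO

variable {S : Type*}

theorem isOpen_setOf_rel (a b : S) : IsOpen {r : TO S | r.1 a b} :=
  TopologicalSpace.isOpen_generateFrom_of_mem ⟨a, b, rfl⟩

def ultrafilterLim (f : Ultrafilter (TO S)) : TO S :=
  ⟨fun a b => {r : TO S | r.1 a b} ∈ f, by
    refine ⟨fun a b hab hba => ?_, fun a b c hab hbc => ?_, fun a b => ?_⟩
    · obtain ⟨r, hr⟩ := Ultrafilter.nonempty_of_mem (inter_mem hab hba)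
      exact r.2.1 a b hr.1 hr.2
    · exact mem_of_superset (inter_mem hab hbc) fun r hr => r.2.2.1 a b c hr.1 hr.2
    · exact Ultrafilter.union_mem_iff.mp (mem_of_superset univ_mem fun r _ => r.2.2.2 a b)⟩

theorem ultrafilter_le_nhds_ultrafilterLim (f : Ultrafilter (TO S)) :
    (f : Filter (TO S)) ≤ 𝓝 (ultrafilterLim f) := by
  refine TopologicalSpace.tendsto_nhds_generateFrom_iff.mpr ?_
  rintro _ ⟨a, b, rfl⟩ hab
  exact hab

instance : CompactSpace (TO S) :=
  ⟨isCompact_iff_ultrafilter_le_nhds.mpr fun f _ =>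
    ⟨ultrafilterLim f, trivial, ultrafilter_le_nhds_ultrafilterLim f⟩⟩

end TO

section LeadingMonomials

variable {K : Type*} [Field K] {t : ℕ} {LM : TO (Mon t) → MvPolynomial (Fin t) K → Mon t}

theorem IsLM.eventually_LM_eq (hLM : IsLM K t LM) {p : MvPolynomial (Fin t) K} (hp : p ≠ 0)
    (r : TO (Mon t)) : ∀ᶠ r' in 𝓝 r, LM r' p = LM r p := by
  have hmax : ∀ᶠ r' in 𝓝 r, ∀ m ∈ p.support, r'.1 m (LM r p) :=
    (eventually_all_finset p.support).mpr fun m hm =>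
      (TO.isOpen_setOf_rel m (LM r p)).mem_nhds ((hLM r p hp).2 m hm)
  filter_upwards [hmax] with r' hr'
  exact r'.2.1 _ _ (hr' _ (hLM r' p hp).1) ((hLM r' p hp).2 _ (hLM r p hp).1)

theorem IsLM.eventually_LMideal_le (hLM : IsLM K t LM) (E : Set (MvPolynomial (Fin t) K))
    (r : TO (Mon t)) : ∀ᶠ r' in 𝓝 r, LMideal K t LM r E ≤ LMideal K t LM r' E := by
  obtain ⟨u, hu, hspan⟩ := (Submodule.fg_span_iff_fg_span_finset_subset _).mp
    (IsNoetherian.noetherian (LMideal K t LM r E))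
  have hgens : ∀ᶠ r' in 𝓝 r, ∀ q ∈ u,
      ∃ e ∈ E, e ≠ 0 ∧ q = MvPolynomial.monomial (LM r' e) (1 : K) :=
    (eventually_all_finset u).mpr fun q hq => by
      obtain ⟨e, he, he0, rfl⟩ := hu hq
      filter_upwards [hLM.eventually_LM_eq he0 r] with r' hr'
      exact ⟨e, he, he0, by rw [hr']⟩
  filter_upwards [hgens] with r' hr'
  rw [LMideal, Ideal.span, hspan]
  exact Submodule.span_le.2 fun q hq => Ideal.subset_span (hr' q hq)

end LeadingMonomials

theorem minimal_LMideals_finite_general (K : Type*) [Field K] (t : ℕ)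
    (LM : TO (Mon t) → MvPolynomial (Fin t) K → Mon t) (hLM : IsLM K t LM)
    (E : Set (MvPolynomial (Fin t) K)) (S : Set (TO (Mon t))) (hS : IsClosed S) :
    {I : Ideal (MvPolynomial (Fin t) K) |
      (∃ r ∈ S, I = LMideal K t LM r E) ∧
      ∀ J : Ideal (MvPolynomial (Fin t) K),
        (∃ r ∈ S, J = LMideal K t LM r E) → J ≤ I → J = I}.Finite := by
  refine (hS.isCompact.finite_setOf_minimal_image (hLM.eventually_LMideal_le E)).subset ?_
  rintro I ⟨⟨r, hr, rfl⟩, hmin⟩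
  exact minimal_iff.mpr
    ⟨⟨r, hr, rfl⟩, fun J ⟨r', hr', hJ⟩ hle => (hmin J ⟨r', hr', hJ.symm⟩ hle).symm⟩

/-- For each `E ⊆ K[X]` and each closed `𝔖 ⊆ TO(M)`, there are at most finitely many distinct
minimal (w.r.t. inclusion) leading monomial ideals of `E` from `𝔖`. -/
theorem minimal_LMideals_finite (K : Type*) [Field K] (t : ℕ) (ht : 1 ≤ t)
    (LM : TO (Mon t) → MvPolynomial (Fin t) K → Mon t) (hLM : IsLM K t LM)
    (E : Set (MvPolynomial (Fin t) K)) (S : Set (TO (Mon t))) (hS : IsClosed S) :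
    {I : Ideal (MvPolynomial (Fin t) K) |
      (∃ r ∈ S, I = LMideal K t LM r E) ∧
      ∀ J : Ideal (MvPolynomial (Fin t) K),
        (∃ r ∈ S, J = LMideal K t LM r E) → J ≤ I → J = I}.Finite :=
  minimal_LMideals_finite_general K t LM hLM E S hS
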